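/- Let 𝒯 be complex conjugation with respect to a fixed basis, H Hermitian with [H,𝒯]=0, and ρ positive semidefinite. Define S_𝒯(ρ) = (ρ + 𝒯ρ𝒯⁻¹)/2. Then the 𝒯-symmetric ergotropy of ρ equals the unrestricted ergotropy of S_𝒯(ρ): max over unitaries U commuting with 𝒯 of tr(ρ(H - U†HU)) equals max over all unitaries V of tr(S_𝒯(ρ)(H - V†HV)). -/

import Mathlib

/-!
With `𝒯` the entrywise conjugation, `S_𝒯(ρ)` is the entrywise real part of `ρ`, so `tr(ρ X)` and
`tr(S_𝒯(ρ) X)` have the same real part whenever `X` is real; in particular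
`W(ρ, H, U) = W(S_𝒯(ρ), H, U)` for real `U`. Both `S_𝒯(ρ)` and `H` are real symmetric, hence
diagonalised by real orthogonal `O`, `P` with eigenvalues `d`, `e`. For a unitary `V`,
`re tr(S_𝒯(ρ) V†HV) = ∑ e_j |Q_ji|² d_i` with `Q = P†VO`; the matrix `(|Q_ji|²)` is doubly
stochastic, so by Birkhoff's theorem this linear expression is minimised at a permutation matrix
`π`. The minimising unitary `P π Oᵀ` is real, so the unrestricted maximal work on `S_𝒯(ρ)` is
attained at a real unitary, where it equals the work on `ρ`.
-/

open Matrix ComplexOrder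

/-- The (real) extracted work `W(σ, H, V) = tr(σ(H - V†HV))`. -/
noncomputable def workR {n : Type*} [Fintype n] (σ H V : Matrix n n ℂ) : ℝ :=
  ((σ * (H - Vᴴ * H * V)).trace).re

open Complex Equiv

theorem ciSup_eq_of_forall_le_apply {ι α : Type*} [ConditionallyCompleteLattice α] {f : ι → α}
    (i₀ : ι) (h : ∀ i, f i ≤ f i₀) : ⨆ i, f i = f i₀ :=
  IsGreatest.csSup_eq ⟨⟨i₀, rfl⟩, by rintro _ ⟨i, rfl⟩; exact h i⟩

namespace Matrix

variable {m n R S : Type*}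

section RealParts

theorem map_ofReal_map_conj (X : Matrix m n ℝ) :
    (X.map ofReal).map (starRingEnd ℂ) = X.map ofReal := by
  ext
  simp

theorem map_re_map_ofReal {A : Matrix m n ℂ} (hA : A.map (starRingEnd ℂ) = A) :
    (A.map re).map ofReal = A := by
  ext i j
  exact conj_eq_iff_re.mp (congr_fun₂ hA i j)

theorem inv_two_smul_add_map_conj (A : Matrix m n ℂ) :
    (2 : ℂ)⁻¹ • (A + A.map (starRingEnd ℂ)) = (A.map re).map ofReal := by
  ext i j
  simp only [smul_apply, add_apply, map_apply, smul_eq_mul, add_conj]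
  push_cast
  ring

theorem IsHermitian.map_re {A : Matrix n n ℂ} (hA : A.IsHermitian) : (A.map re).IsHermitian :=
  hA.map re fun z => by simp

theorem conjTranspose_map_ofReal (X : Matrix m n ℝ) : (X.map ofReal)ᴴ = Xᴴ.map ofReal :=
  (conjTranspose_map _ fun _ => (conj_ofReal _).symm).symm

variable [Fintype n]

theorem map_ofReal_mul {p : Type*} (X : Matrix m n ℝ) (Y : Matrix n p ℝ) :
    (X * Y).map ofReal = X.map ofReal * Y.map ofReal :=
  Matrix.map_mul (f := ofRealHom)

theorem re_trace_map_re_mul [Fintype m] (A : Matrix m n ℂ) (Y : Matrix n m ℝ) :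
    ((A.map re).map ofReal * Y.map ofReal).trace.re = (A * Y.map ofReal).trace.re := by
  simp [trace, mul_apply, re_sum]

end RealParts

theorem permMatrix_map [DecidableEq n] [Zero R] [One R] [Zero S] [One S] (σ : Perm n) {f : R → S}
    (h₀ : f 0 = 0) (h₁ : f 1 = 1) : (σ.permMatrix R).map f = σ.permMatrix S := by
  ext i j
  simp [PEquiv.toMatrix_apply, apply_ite f, h₀, h₁]

section Unitary

variable [Fintype n] [DecidableEq n]

theorem map_mem_unitaryGroup [CommRing R] [StarRing R] [CommRing S] [StarRing S] (f : R →+* S)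
    (hf : Function.Semiconj f star star) {O : Matrix n n R} (hO : O ∈ unitaryGroup n R) :
    O.map f ∈ unitaryGroup n S := by
  rw [mem_unitaryGroup_iff, star_eq_conjTranspose, ← conjTranspose_map f hf, ← Matrix.map_mul,
    ← star_eq_conjTranspose, mem_unitaryGroup_iff.mp hO, Matrix.map_one f f.map_zero f.map_one]

theorem map_ofReal_mem_unitaryGroup {O : Matrix n n ℝ} (hO : O ∈ unitaryGroup n ℝ) :
    O.map ofReal ∈ unitaryGroup n ℂ :=
  map_mem_unitaryGroup ofRealHom (fun _ => (conj_ofReal _).symm) hO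

theorem permMatrix_mem_unitaryGroup [CommRing R] [StarRing R] (σ : Perm n) :
    σ.permMatrix R ∈ unitaryGroup n R := by
  rw [mem_unitaryGroup_iff', star_eq_conjTranspose, conjTranspose_permMatrix, ← permMatrix_mul,
    mul_inv_cancel, permMatrix_one]

theorem map_normSq_mem_doublyStochastic {Q : Matrix n n ℂ} (hQ : Q ∈ unitaryGroup n ℂ) :
    Q.map normSq ∈ doublyStochastic ℝ n := by
  have diag_eq (A : Matrix n n ℂ) (i : n) :
      (A * star A) i i = ((∑ j, normSq (A i j) : ℝ) : ℂ) := by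
    simp [mul_apply, mul_conj]
  refine mem_doublyStochastic_iff_sum.mpr ⟨fun _ _ => normSq_nonneg _, fun i => ?_, fun j => ?_⟩
  · have h := diag_eq Q i
    rw [hQ.2, one_apply_eq] at h
    exact_mod_cast h.symm
  · have h := diag_eq (star Q) j
    rw [star_star, hQ.1, one_apply_eq] at h
    simp only [star_apply, RCLike.star_def, normSq_conj] at h
    exact_mod_cast h.symm

end Unitary

variable [Fintype n] [DecidableEq n]

theorem re_trace_diagonal_mul_conjTranspose_mul_diagonal_mul (d e : n → ℝ) (Q : Matrix n n ℂ) :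
    (diagonal (ofReal ∘ d) * Qᴴ * diagonal (ofReal ∘ e) * Q).trace.re
      = e ⬝ᵥ (Q.map normSq *ᵥ d) := by
  have diag_eq (i : n) : (diagonal (ofReal ∘ d) * Qᴴ * diagonal (ofReal ∘ e) * Q) i i
      = ∑ k, ((e k * (normSq (Q k i) * d i) : ℝ) : ℂ) := by
    refine Finset.sum_congr rfl fun k _ => ?_
    simp only [mul_diagonal, diagonal_mul, conjTranspose_apply, RCLike.star_def,
      Function.comp_apply]
    push_cast
    rw [← mul_conj]
    ring
  simp only [trace, diag_apply, diag_eq, re_sum, ofReal_re, dotProduct, mulVec, map_apply,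
    Finset.mul_sum]
  exact Finset.sum_comm

theorem exists_perm_dotProduct_comp_le_of_mem_doublyStochastic (d e : n → ℝ)
    {M : Matrix n n ℝ} (hM : M ∈ doublyStochastic ℝ n) :
    ∃ σ : Perm n, e ⬝ᵥ (d ∘ σ) ≤ e ⬝ᵥ (M *ᵥ d) := by
  let f : Matrix n n ℝ →ₗ[ℝ] ℝ :=
    { toFun := fun M => e ⬝ᵥ (M *ᵥ d)
      map_add' := fun M N => by simp [add_mulVec, dotProduct_add]
      map_smul' := fun c M => by simp [smul_mulVec, dotProduct_smul] }
  rw [← SetLike.mem_coe, doublyStochastic_eq_convexHull_permMatrix] at hM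
  obtain ⟨_, ⟨σ, rfl⟩, hσ⟩ :=
    (f.concaveOn (convex_convexHull ℝ _)).exists_le_of_mem_convexHull (subset_convexHull ℝ _) hM
  exact ⟨σ, by simpa [f, permMatrix_mulVec] using hσ⟩

theorem IsHermitian.exists_map_ofReal_eq {B : Matrix n n ℝ} (hB : B.IsHermitian) :
    ∃ O ∈ unitaryGroup n ℝ, ∃ d : n → ℝ,
      B.map ofReal = O.map ofReal * diagonal (ofReal ∘ d) * (O.map ofReal)ᴴ := by
  refine ⟨hB.eigenvectorUnitary, Subtype.prop _, hB.eigenvalues, ?_⟩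
  conv_lhs => rw [hB.spectral_theorem]
  rw [Unitary.conjStarAlgAut_apply, star_eq_conjTranspose, map_ofReal_mul, map_ofReal_mul,
    conjTranspose_map_ofReal, diagonal_map ofReal_zero]
  rfl

theorem exists_orthogonal_isMinOn_re_trace {B C : Matrix n n ℝ} (hB : B.IsHermitian)
    (hC : C.IsHermitian) :
    ∃ W ∈ unitaryGroup n ℝ, IsMinOn (fun V => (B.map ofReal * (Vᴴ * C.map ofReal * V)).trace.re)
      (unitaryGroup n ℂ) (W.map ofReal) := by
  obtain ⟨O, hO, d, hBd⟩ := hB.exists_map_ofReal_eq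
  obtain ⟨P, hP, e, hCe⟩ := hC.exists_map_ofReal_eq
  have htrace (V : Matrix n n ℂ) : (B.map ofReal * (Vᴴ * C.map ofReal * V)).trace.re
      = e ⬝ᵥ (((P.map ofReal)ᴴ * V * O.map ofReal).map normSq *ᵥ d) := by
    rw [← re_trace_diagonal_mul_conjTranspose_mul_diagonal_mul, hBd, hCe]
    simp only [conjTranspose_mul, conjTranspose_conjTranspose, Matrix.mul_assoc]
    rw [trace_mul_comm]
    simp only [Matrix.mul_assoc]
  obtain ⟨σ, hσ⟩ := Finite.exists_min fun σ : Perm n => e ⬝ᵥ (d ∘ σ)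
  refine ⟨P * σ.permMatrix ℝ * star O, ?_, isMinOn_iff.mpr fun V hV => ?_⟩
  · exact mul_mem (mul_mem hP (permMatrix_mem_unitaryGroup σ)) (Unitary.star_mem hO)
  have hQ : (P.map ofReal)ᴴ * (P * σ.permMatrix ℝ * star O).map ofReal * O.map ofReal
      = σ.permMatrix ℂ := by
    have hPO : star P * (P * σ.permMatrix ℝ * star O) * O = σ.permMatrix ℝ := by
      calc star P * (P * σ.permMatrix ℝ * star O) * O
          = star P * P * σ.permMatrix ℝ * (star O * O) := by simp only [Matrix.mul_assoc]
        _ = σ.permMatrix ℝ := by rw [hP.1, hO.1, Matrix.one_mul, Matrix.mul_one]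
    rw [conjTranspose_map_ofReal, ← map_ofReal_mul, ← map_ofReal_mul, ← star_eq_conjTranspose,
      hPO, permMatrix_map σ ofReal_zero ofReal_one]
  obtain ⟨τ, hτ⟩ := exists_perm_dotProduct_comp_le_of_mem_doublyStochastic d e
    (map_normSq_mem_doublyStochastic (mul_mem (mul_mem (Unitary.star_mem
      (map_ofReal_mem_unitaryGroup hP)) hV) (map_ofReal_mem_unitaryGroup hO)))
  rw [htrace, htrace, hQ, permMatrix_map σ (map_zero normSq) (map_one normSq), permMatrix_mulVec]
  exact (hσ τ).trans hτ

end Matrix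

section Work

variable {n : Type*} [Fintype n]

theorem workR_eq_sub (σ H V : Matrix n n ℂ) :
    workR σ H V = (σ * H).trace.re - (σ * (Vᴴ * H * V)).trace.re := by
  rw [workR, Matrix.mul_sub, trace_sub, sub_re]

theorem workR_map_re_map_ofReal (ρ : Matrix n n ℂ) (B W : Matrix n n ℝ) :
    workR ((ρ.map re).map ofReal) (B.map ofReal) (W.map ofReal)
      = workR ρ (B.map ofReal) (W.map ofReal) := by
  have hdiff : B.map ofReal - (W.map ofReal)ᴴ * B.map ofReal * W.map ofReal
      = (B - Wᴴ * B * W).map ofReal := by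
    rw [conjTranspose_map_ofReal, ← map_ofReal_mul, ← map_ofReal_mul,
      Matrix.map_sub _ fun x y => ofReal_sub x y]
  rw [workR, workR, hdiff, re_trace_map_re_mul]

end Work

theorem time_reversal_ergotropy_eq {n : Type*} [Fintype n] [DecidableEq n]
    (H ρ : Matrix n n ℂ)
    (hH : H.IsHermitian) (hHreal : H.map (starRingEnd ℂ) = H)
    (hρ : ρ.PosSemidef) :
    (⨆ U : {U : Matrix.unitaryGroup n ℂ //
        ((U : Matrix n n ℂ)).map (starRingEnd ℂ) = (U : Matrix n n ℂ)},
      workR ρ H ((U : Matrix.unitaryGroup n ℂ) : Matrix n n ℂ))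
    = ⨆ V : Matrix.unitaryGroup n ℂ,
        workR ((2 : ℂ)⁻¹ • (ρ + ρ.map (starRingEnd ℂ))) H (V : Matrix n n ℂ) := by
  rw [inv_two_smul_add_map_conj]
  set S := (ρ.map re).map ofReal
  obtain ⟨W, hW, hmin⟩ := exists_orthogonal_isMinOn_re_trace hρ.1.map_re hH.map_re
  rw [map_re_map_ofReal hHreal] at hmin
  let U₀ : unitaryGroup n ℂ := ⟨W.map ofReal, map_ofReal_mem_unitaryGroup hW⟩
  have hU₀ : (U₀ : Matrix n n ℂ).map (starRingEnd ℂ) = U₀ := map_ofReal_map_conj W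
  have hmax (V : unitaryGroup n ℂ) : workR S H V ≤ workR S H U₀ := by
    rw [workR_eq_sub, workR_eq_sub]
    exact sub_le_sub_left (hmin V.2) _
  have hsym {U : Matrix n n ℂ} (hU : U.map (starRingEnd ℂ) = U) : workR ρ H U = workR S H U := by
    rw [← map_re_map_ofReal hU, ← map_re_map_ofReal hHreal]
    exact (workR_map_re_map_ofReal ρ _ _).symm
  rw [ciSup_eq_of_forall_le_apply ⟨U₀, hU₀⟩ fun U => ?_, ciSup_eq_of_forall_le_apply U₀ hmax,
    hsym hU₀]
  rw [hsym U.2, hsym hU₀]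
  exact hmax U
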